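/- Let D be a triangulated category with a bounded t-structure with heart H, and let (T, F) be a torsion pair on H. Then the full subcategory K = ⟨F[1], T⟩, consisting of objects x fitting into an exact triangle f[1] → x → t → f[2] with f ∈ F and t ∈ T, is the heart of a bounded t-structure on D. -/

import Mathlib

open CategoryTheory Limits Pretriangulated Triangulated

variable (D : Type*) [Category D] [Preadditive D] [HasZeroObject D] [HasShift D ℤ]
  [∀ n : ℤ, (shiftFunctor D n).Additive] [Pretriangulated D]

/-- The heart of a t-structure, as a set of objects. -/
def heartSet {D : Type*} [Category D] [Preadditive D] [HasZeroObject D] [HasShift D ℤ]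
    [∀ n : ℤ, (shiftFunctor D n).Additive] [Pretriangulated D]
    (t : TStructure D) : Set D :=
  {X | t.le 0 X ∧ t.ge 0 X}

/-- A t-structure is bounded if every object lies in `D^{≥ a} ∩ D^{≤ b}` for some `a, b`. -/
def TStructureIsBounded {D : Type*} [Category D] [Preadditive D] [HasZeroObject D]
    [HasShift D ℤ] [∀ n : ℤ, (shiftFunctor D n).Additive] [Pretriangulated D]
    (t : TStructure D) : Prop :=
  ∀ X : D, ∃ a b : ℤ, t.ge a X ∧ t.le b X

/-- A torsion pair `(T, F)` on the heart of a t-structure `t`: both classes lie in the heart,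
`Hom(T, F) = 0`, and every object of the heart is an extension (a distinguished triangle)
of a torsion-free object by a torsion object. -/
structure IsHeartTorsionPair {D : Type*} [Category D] [Preadditive D] [HasZeroObject D]
    [HasShift D ℤ] [∀ n : ℤ, (shiftFunctor D n).Additive] [Pretriangulated D]
    (t : TStructure D) (T F : Set D) : Prop where
  subset_T : T ⊆ heartSet t
  subset_F : F ⊆ heartSet t
  hom_zero : ∀ ⦃a b : D⦄, a ∈ T → b ∈ F → ∀ f : a ⟶ b, f = 0
  decomp : ∀ h ∈ heartSet t, ∃ (a b : D) (_ : a ∈ T) (_ : b ∈ F) (f : a ⟶ h)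
    (g : h ⟶ b) (w : b ⟶ a⟦(1 : ℤ)⟧), Triangle.mk f g w ∈ distTriang D

/-- The Happel–Reiten–Smalø tilt `K = ⟨F[1], T⟩`: objects `x` fitting into an exact triangle
`f[1] → x → t → f[2]` with `f ∈ F` and `t ∈ T`. -/
def tiltSet {D : Type*} [Category D] [Preadditive D] [HasZeroObject D] [HasShift D ℤ]
    [∀ n : ℤ, (shiftFunctor D n).Additive] [Pretriangulated D]
    (T F : Set D) : Set D :=
  {x | ∃ (yF yT : D) (_ : yF ∈ F) (_ : yT ∈ T) (α : yF⟦(1 : ℤ)⟧ ⟶ x) (β : x ⟶ yT)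
    (γ : yT ⟶ yF⟦(1 : ℤ)⟧⟦(1 : ℤ)⟧), Triangle.mk α β γ ∈ distTriang D}

/-!
The aisle of the tilted t-structure is `⊥(D^{≥1} ∪ F)` (the objects `X ≤ 0` with `H⁰ X ∈ T`)
and its co-aisle is the right orthogonal of the aisle. For the truncation triangle of `A`, let
`B = τ^{≤0} A`, let `H⁰ A = τ^{≥0} B` have torsion part `a` and torsion-free quotient `b`, and let
`X → B` be the cocone of `B → H⁰ A → b`; then `X → B → A` is the truncation map. Since `D` is only
pretriangulated, the octahedral axiom is replaced by the fact that an object is right (resp. left)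
orthogonal to the cone of a composite as soon as it is to the cones of both factors
(`hom_to_cone_comp_eq_zero`, `hom_from_cone_comp_eq_zero`). An object of the new heart lies in
`D^{[-1,0]}`, and orthogonality to `F` (resp. to `T[1]`) forces `H⁰ x ∈ T` (resp. `H⁻¹ x ∈ F`),
which gives the triangle `F[1] → x → T`.
-/

section Orthogonality

variable {C : Type*} [Category C] [Preadditive C] [HasShift C ℤ]
  [∀ n : ℤ, (shiftFunctor C n).Additive]

lemma forall_shift_map_eq_zero_iff (X Y : C) (n : ℤ) :
    (∀ φ : X⟦n⟧ ⟶ Y⟦n⟧, φ = 0) ↔ ∀ φ : X ⟶ Y, φ = 0 := by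
  refine ⟨fun h φ => (shiftFunctor C n).map_injective (by simp [h]), fun h φ => ?_⟩
  obtain ⟨ψ, rfl⟩ := (shiftFunctor C n).map_surjective φ
  simp [h ψ]

lemma forall_hom_shift_eq_zero_iff (X Y : C) (n : ℤ) :
    (∀ φ : X⟦n⟧ ⟶ Y, φ = 0) ↔ ∀ φ : X ⟶ Y⟦-n⟧, φ = 0 := by
  have : (shiftEquiv C n).functor.Additive := inferInstanceAs (shiftFunctor C n).Additive
  have : (shiftEquiv C n).inverse.Additive := inferInstanceAs (shiftFunctor C (-n)).Additive
  let e : (X⟦n⟧ ⟶ Y) ≃+ (X ⟶ Y⟦-n⟧) := (shiftEquiv C n).toAdjunction.homAddEquiv X Y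
  refine ⟨fun h φ => ?_, fun h φ => e.injective (by rw [h (e φ), map_zero])⟩
  obtain ⟨ψ, rfl⟩ := e.surjective φ
  rw [h ψ, map_zero]

namespace CategoryTheory.ObjectProperty

variable (P : ObjectProperty C)

lemma leftOrthogonal_le_shift (a : ℤ) (h : P ≤ P.shift (-a)) :
    P.leftOrthogonal ≤ P.leftOrthogonal.shift a :=
  fun X hX W φ hW => (forall_hom_shift_eq_zero_iff X W a).2 (fun ψ => hX ψ (h W hW)) φ

lemma rightOrthogonal_le_shift_neg (a : ℤ) (h : P ≤ P.shift a) :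
    P.rightOrthogonal ≤ P.rightOrthogonal.shift (-a) :=
  fun Y hY Z φ hZ => (forall_hom_shift_eq_zero_iff Z Y a).1 (fun ψ => hY ψ (h Z hZ)) φ

end CategoryTheory.ObjectProperty

variable [HasZeroObject C] [Pretriangulated C]

lemma hom_to_cone_comp_eq_zero {Z X₁ X₂ X₃ C₁ C₂ C₃ : C} {f : X₁ ⟶ X₂} {g : X₂ ⟶ X₃}
    {v₁ : X₂ ⟶ C₁} {w₁ : C₁ ⟶ X₁⟦(1 : ℤ)⟧} {v₂ : X₃ ⟶ C₂} {w₂ : C₂ ⟶ X₂⟦(1 : ℤ)⟧}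
    {v₃ : X₃ ⟶ C₃} {w₃ : C₃ ⟶ X₁⟦(1 : ℤ)⟧}
    (h₁ : Triangle.mk f v₁ w₁ ∈ distTriang C) (h₂ : Triangle.mk g v₂ w₂ ∈ distTriang C)
    (h₃ : Triangle.mk (f ≫ g) v₃ w₃ ∈ distTriang C)
    (hC₁ : ∀ φ : Z ⟶ C₁, φ = 0) (hC₂ : ∀ φ : Z ⟶ C₂, φ = 0) (ψ : Z ⟶ C₃) : ψ = 0 := by
  have hw : ψ ≫ w₃ = 0 := by
    have h₃₁ : w₃ ≫ (f ≫ g)⟦(1 : ℤ)⟧' = 0 := comp_distTriang_mor_zero₃₁ _ h₃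
    have hfg : ((ψ ≫ w₃) ≫ f⟦(1 : ℤ)⟧') ≫ g⟦(1 : ℤ)⟧' = 0 := by
      rw [Category.assoc, Category.assoc, ← Functor.map_comp, h₃₁, comp_zero]
    obtain ⟨κ, hκ⟩ : ∃ κ : Z ⟶ C₂, (ψ ≫ w₃) ≫ f⟦(1 : ℤ)⟧' = κ ≫ w₂ :=
      Triangle.coyoneda_exact₁ _ h₂ _ hfg
    have hf : (ψ ≫ w₃) ≫ f⟦(1 : ℤ)⟧' = 0 := by rw [hκ, hC₂ κ, zero_comp]
    obtain ⟨κ', hκ'⟩ : ∃ κ' : Z ⟶ C₁, ψ ≫ w₃ = κ' ≫ w₁ := Triangle.coyoneda_exact₁ _ h₁ _ hf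
    rw [hκ', hC₁ κ', zero_comp]
  obtain ⟨α, rfl⟩ : ∃ α : Z ⟶ X₃, ψ = α ≫ v₃ := Triangle.coyoneda_exact₃ _ h₃ ψ hw
  obtain ⟨β, rfl⟩ : ∃ β : Z ⟶ X₂, α = β ≫ g := Triangle.coyoneda_exact₂ _ h₂ α (hC₂ _)
  obtain ⟨γ, rfl⟩ : ∃ γ : Z ⟶ X₁, β = γ ≫ f := Triangle.coyoneda_exact₂ _ h₁ β (hC₁ _)
  have h₁₂ : (f ≫ g) ≫ v₃ = 0 := comp_distTriang_mor_zero₁₂ _ h₃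
  rw [Category.assoc, Category.assoc, ← Category.assoc f, h₁₂, comp_zero]

lemma hom_from_cone_comp_eq_zero {V X₁ X₂ X₃ C₁ C₂ C₃ : C} {f : X₁ ⟶ X₂} {g : X₂ ⟶ X₃}
    {v₁ : X₂ ⟶ C₁} {w₁ : C₁ ⟶ X₁⟦(1 : ℤ)⟧} {v₂ : X₃ ⟶ C₂} {w₂ : C₂ ⟶ X₂⟦(1 : ℤ)⟧}
    {v₃ : X₃ ⟶ C₃} {w₃ : C₃ ⟶ X₁⟦(1 : ℤ)⟧}
    (h₁ : Triangle.mk f v₁ w₁ ∈ distTriang C) (h₂ : Triangle.mk g v₂ w₂ ∈ distTriang C)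
    (h₃ : Triangle.mk (f ≫ g) v₃ w₃ ∈ distTriang C)
    (hC₁ : ∀ φ : C₁ ⟶ V, φ = 0) (hC₂ : ∀ φ : C₂ ⟶ V, φ = 0) (ψ : C₃ ⟶ V) : ψ = 0 := by
  have hv : v₃ ≫ ψ = 0 := by
    have h₁₂ : (f ≫ g) ≫ v₃ = 0 := comp_distTriang_mor_zero₁₂ _ h₃
    have hfg : f ≫ g ≫ v₃ ≫ ψ = 0 := by
      simp only [← Category.assoc, h₁₂, zero_comp]
    obtain ⟨κ, hκ⟩ : ∃ κ : C₁ ⟶ V, g ≫ v₃ ≫ ψ = v₁ ≫ κ := Triangle.yoneda_exact₂ _ h₁ _ hfg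
    have hg : g ≫ v₃ ≫ ψ = 0 := by rw [hκ, hC₁ κ, comp_zero]
    obtain ⟨κ', hκ'⟩ : ∃ κ' : C₂ ⟶ V, v₃ ≫ ψ = v₂ ≫ κ' := Triangle.yoneda_exact₂ _ h₂ _ hg
    rw [hκ', hC₂ κ', comp_zero]
  obtain ⟨α, rfl⟩ : ∃ α : X₁⟦(1 : ℤ)⟧ ⟶ V, ψ = w₃ ≫ α := Triangle.yoneda_exact₃ _ h₃ ψ hv
  obtain ⟨β, rfl⟩ : ∃ β : X₂⟦(1 : ℤ)⟧ ⟶ V, α = (-f⟦(1 : ℤ)⟧') ≫ β :=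
    Triangle.yoneda_exact₃ _ (rot_of_distTriang _ h₁) α (hC₁ _)
  obtain ⟨γ, rfl⟩ : ∃ γ : X₃⟦(1 : ℤ)⟧ ⟶ V, β = (-g⟦(1 : ℤ)⟧') ≫ γ :=
    Triangle.yoneda_exact₃ _ (rot_of_distTriang _ h₂) β (hC₂ _)
  have h₃₁ : w₃ ≫ (f ≫ g)⟦(1 : ℤ)⟧' = 0 := comp_distTriang_mor_zero₃₁ _ h₃
  simp only [Preadditive.neg_comp, Preadditive.comp_neg, neg_neg]
  rw [← Functor.map_comp_assoc, reassoc_of% h₃₁, zero_comp]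

end Orthogonality

namespace IsHeartTorsionPair

variable {D} {t : TStructure D} {T F : Set D}

lemma exists_mem_torsion_iso (htf : IsHeartTorsionPair t T F) {H : D} (hH : H ∈ heartSet t)
    (hHF : ∀ b ∈ F, ∀ φ : H ⟶ b, φ = 0) : ∃ a ∈ T, Nonempty (a ≅ H) := by
  obtain ⟨a, b, ha, hb, i, p, e, hT⟩ := htf.decomp H hH
  have hb0 : IsZero b := by
    rw [IsZero.iff_id_eq_zero]
    have hp : p ≫ 𝟙 b = 0 := by rw [Category.comp_id]; exact hHF b hb p
    obtain ⟨r, hr⟩ : ∃ r : a⟦(1 : ℤ)⟧ ⟶ b, 𝟙 b = e ≫ r := Triangle.yoneda_exact₃ _ hT _ hp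
    rw [hr, t.zero_of_isLE_of_isGE r (-1) 0 (by omega)
      ⟨t.le_shift 0 1 (-1) (by omega) a (htf.subset_T ha).1⟩ ⟨(htf.subset_F hb).2⟩, comp_zero]
  have : IsIso i := (Triangle.isZero₃_iff_isIso₁ _ hT).1 hb0
  exact ⟨a, ha, ⟨asIso i⟩⟩

lemma exists_mem_torsionFree_iso (htf : IsHeartTorsionPair t T F) {H : D} (hH : H ∈ heartSet t)
    (hTH : ∀ a ∈ T, ∀ φ : a ⟶ H, φ = 0) : ∃ b ∈ F, Nonempty (H ≅ b) := by
  obtain ⟨a, b, ha, hb, i, p, e, hT⟩ := htf.decomp H hH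
  have ha0 : IsZero a := by
    rw [IsZero.iff_id_eq_zero]
    have hi : 𝟙 a ≫ i = 0 := by rw [Category.id_comp]; exact hTH a ha i
    obtain ⟨r, hr⟩ := Triangle.coyoneda_exact₂ _ (inv_rot_of_distTriang _ hT) _ hi
    have hr0 : r = 0 := t.zero_of_isLE_of_isGE r 0 1 (by omega) ⟨(htf.subset_T ha).1⟩
      ⟨t.ge_shift 0 (-1) 1 (by omega) b (htf.subset_F hb).2⟩
    rw [hr, hr0, zero_comp]
    rfl
  have : IsIso p := (Triangle.isZero₁_iff_isIso₂ _ hT).1 ha0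
  exact ⟨b, hb, ⟨asIso p⟩⟩

end IsHeartTorsionPair

namespace CategoryTheory.Triangulated.TStructure

variable {D} (t : TStructure D) {T F : Set D}

lemma exists_distTriang_heart_of_le_zero {B : D} (hB : t.le 0 B) :
    ∃ (B' H : D) (f : B' ⟶ B) (g : B ⟶ H) (δ : H ⟶ B'⟦(1 : ℤ)⟧),
      t.le (-1) B' ∧ H ∈ heartSet t ∧ Triangle.mk f g δ ∈ distTriang D := by
  obtain ⟨B', H, hB', hH, f, g, δ, hT⟩ := t.exists_triangle B (-1) 0 (by omega)
  have hB'₁ : t.le 0 (B'⟦(1 : ℤ)⟧) :=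
    t.le_monotone (by omega) _ (t.le_shift (-1) 1 (-2) (by omega) B' hB')
  exact ⟨B', H, f, g, δ, hB', ⟨(t.isLE₂ _ (rot_of_distTriang _ hT) 0 ⟨hB⟩ ⟨hB'₁⟩).le, hH⟩, hT⟩

variable (F) in
abbrev tiltAisle : ObjectProperty D :=
  ObjectProperty.leftOrthogonal (fun W => t.ge 1 W ∨ W ∈ F)

variable (F) in
abbrev tiltCoaisle : ObjectProperty D :=
  (t.tiltAisle F).rightOrthogonal

variable {t}

lemma ge_zero_of_ge_one_or_mem (hF : F ⊆ heartSet t) {W : D} (hW : t.ge 1 W ∨ W ∈ F) :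
    t.ge 0 W :=
  hW.elim (t.ge_antitone (by omega) W) (fun hW => (hF hW).2)

variable (t F) in
lemma tiltAisle_le : t.tiltAisle F ≤ t.le 0 :=
  fun X hX => ((t.isLE_iff_orthogonal 0 1 rfl X).2 fun _ f hY => hX f (Or.inl hY.ge)).le

lemma le_neg_one_le_tiltAisle (hF : F ⊆ heartSet t) : t.le (-1) ≤ t.tiltAisle F :=
  fun _ hX _ f hW =>
    t.zero_of_isLE_of_isGE f (-1) 0 (by omega) ⟨hX⟩ ⟨ge_zero_of_ge_one_or_mem hF hW⟩

lemma tiltCoaisle_le (hF : F ⊆ heartSet t) : t.tiltCoaisle F ≤ t.ge 0 :=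
  fun Y hY => ((t.isGE_iff_orthogonal (-1) 0 (by omega) Y).2
    fun _ f hX => hY f (le_neg_one_le_tiltAisle hF _ hX.le)).ge

lemma tiltAisle_of_mem_torsion (htf : IsHeartTorsionPair t T F) {a : D} (ha : a ∈ T) :
    t.tiltAisle F a := by
  rintro W φ (hW | hW)
  · exact t.zero_of_isLE_of_isGE φ 0 1 (by omega) ⟨(htf.subset_T ha).1⟩ ⟨hW⟩
  · exact htf.hom_zero ha hW φ

lemma tiltAisle_le_shift_one (hF : F ⊆ heartSet t) :
    t.tiltAisle F ≤ (t.tiltAisle F).shift (1 : ℤ) :=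
  ObjectProperty.leftOrthogonal_le_shift _ 1 fun _ hW =>
    Or.inl (t.ge_shift 0 (-1) 1 (by omega) _ (ge_zero_of_ge_one_or_mem hF hW))

lemma tiltCoaisle_le_shift_neg_one (hF : F ⊆ heartSet t) :
    t.tiltCoaisle F ≤ (t.tiltCoaisle F).shift (-1 : ℤ) :=
  ObjectProperty.rightOrthogonal_le_shift_neg _ 1 (tiltAisle_le_shift_one hF)

lemma exists_distTriang_tiltAisle_tiltCoaisle (htf : IsHeartTorsionPair t T F) (A : D) :
    ∃ (X Y : D) (_ : t.tiltAisle F X) (_ : t.tiltCoaisle F Y) (f : X ⟶ A) (g : A ⟶ Y)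
      (h : Y ⟶ X⟦(1 : ℤ)⟧), Triangle.mk f g h ∈ distTriang D := by
  obtain ⟨B, C, hB, hC, u, v, w, hBA⟩ := t.exists_triangle A 0 1 (by omega)
  obtain ⟨B', H, f, g, δ, hB', hH, hBH⟩ := t.exists_distTriang_heart_of_le_zero hB
  obtain ⟨a, b, ha, hb, i, p, e, hab⟩ := htf.decomp H hH
  obtain ⟨X, q, r, hX⟩ := distinguished_cocone_triangle₁ (g ≫ p)
  obtain ⟨Y, vY, wY, hY⟩ := distinguished_cocone_triangle (q ≫ u)
  refine ⟨X, Y, fun W φ hW => ?_, fun Z φ hZ => ?_, q ≫ u, vY, wY, hY⟩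
  · have hg : Triangle.mk g δ (-f⟦(1 : ℤ)⟧') ∈ distTriang D := rot_of_distTriang _ hBH
    have hp : Triangle.mk p e (-i⟦(1 : ℤ)⟧') ∈ distTriang D := rot_of_distTriang _ hab
    have hgp : Triangle.mk (g ≫ p) r (-q⟦(1 : ℤ)⟧') ∈ distTriang D := rot_of_distTriang _ hX
    refine (forall_shift_map_eq_zero_iff X W 1).1 (hom_from_cone_comp_eq_zero hg hp hgp ?_ ?_) φ
    · exact (forall_shift_map_eq_zero_iff B' W 1).2 fun ψ => t.zero_of_isLE_of_isGE ψ (-1) 0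
        (by omega) ⟨hB'⟩ ⟨ge_zero_of_ge_one_or_mem htf.subset_F hW⟩
    · exact (forall_shift_map_eq_zero_iff a W 1).2 fun ψ => tiltAisle_of_mem_torsion htf ha ψ hW
  · exact hom_to_cone_comp_eq_zero hX hBA hY (fun ψ => hZ ψ (Or.inr hb))
      (fun ψ => hZ ψ (Or.inl hC)) φ

lemma mem_tiltSet_of_distTriang {B' x H yF yT : D} {f : B' ⟶ x} {g : x ⟶ H}
    {δ : H ⟶ B'⟦(1 : ℤ)⟧} (hT : Triangle.mk f g δ ∈ distTriang D) (hyF : yF ∈ F) (hyT : yT ∈ T)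
    (e₁ : yF⟦(1 : ℤ)⟧ ≅ B') (e₃ : yT ≅ H) : x ∈ tiltSet T F := by
  refine ⟨yF, yT, hyF, hyT, e₁.hom ≫ f, g ≫ e₃.inv, e₃.hom ≫ δ ≫ e₁.inv⟦(1 : ℤ)⟧',
    isomorphic_distinguished _ hT _ (Triangle.isoMk _ _ e₁ (Iso.refl x) e₃ ?_ ?_ ?_)⟩
  · exact Category.comp_id _
  · exact (by simp : (g ≫ e₃.inv) ≫ e₃.hom = 𝟙 x ≫ g)
  · exact (by simp [← Functor.map_comp] :
      (e₃.hom ≫ δ ≫ e₁.inv⟦(1 : ℤ)⟧') ≫ e₁.hom⟦(1 : ℤ)⟧' = e₃.hom ≫ δ)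

lemma tiltAisle_of_mem_tiltSet (htf : IsHeartTorsionPair t T F) {x : D} (hx : x ∈ tiltSet T F) :
    t.tiltAisle F x := by
  obtain ⟨yF, yT, hyF, hyT, α, β, γ, hT⟩ := hx
  exact (t.tiltAisle F).ext_of_isTriangulatedClosed₂ _ hT
    (le_neg_one_le_tiltAisle htf.subset_F _
      (t.le_shift 0 1 (-1) (by omega) yF (htf.subset_F hyF).1))
    (tiltAisle_of_mem_torsion htf hyT)

lemma tiltCoaisle_shift_of_mem_tiltSet (htf : IsHeartTorsionPair t T F) {x : D}
    (hx : x ∈ tiltSet T F) : t.tiltCoaisle F (x⟦(-1 : ℤ)⟧) := by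
  obtain ⟨yF, yT, hyF, hyT, α, β, γ, hT⟩ := hx
  intro Z φ hZ
  refine (forall_hom_shift_eq_zero_iff Z x 1).1 (fun ψ => ?_) φ
  have hψ : ψ ≫ β = 0 := t.zero_of_isLE_of_isGE _ (-1) 0 (by omega)
    ⟨t.le_shift 0 1 (-1) (by omega) Z (tiltAisle_le t F Z hZ)⟩ ⟨(htf.subset_T hyT).2⟩
  obtain ⟨κ, hκ⟩ : ∃ κ : Z⟦(1 : ℤ)⟧ ⟶ yF⟦(1 : ℤ)⟧, ψ = κ ≫ α := Triangle.coyoneda_exact₂ _ hT ψ hψ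
  rw [hκ, (forall_shift_map_eq_zero_iff Z yF 1).2 (fun κ => hZ κ (Or.inr hyF)) κ, zero_comp]

lemma mem_tiltSet_of_tiltAisle (htf : IsHeartTorsionPair t T F) {x : D} (hx : t.tiltAisle F x)
    (hx' : t.tiltCoaisle F (x⟦(-1 : ℤ)⟧)) : x ∈ tiltSet T F := by
  obtain ⟨B', H, f, g, δ, hB', hH, hT⟩ :=
    t.exists_distTriang_heart_of_le_zero (tiltAisle_le t F x hx)
  obtain ⟨yT, hyT, ⟨e₃⟩⟩ := htf.exists_mem_torsion_iso hH fun b hb φ => by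
    obtain ⟨ψ, hψ⟩ : ∃ ψ : B'⟦(1 : ℤ)⟧ ⟶ b, φ = δ ≫ ψ :=
      Triangle.yoneda_exact₃ _ hT φ (hx _ (Or.inr hb))
    rw [hψ, t.zero_of_isLE_of_isGE ψ (-2) 0 (by omega)
      ⟨t.le_shift (-1) 1 (-2) (by omega) B' hB'⟩ ⟨(htf.subset_F hb).2⟩, comp_zero]
  have : t.IsGE (x⟦(-1 : ℤ)⟧) 0 := ⟨tiltCoaisle_le htf.subset_F _ hx'⟩
  have hx₁ : t.ge (-1) x := (t.isGE_of_shift x (-1) (-1) 0).ge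
  have hB'₀ : t.ge (-1) B' := (t.isGE₂ _ (inv_rot_of_distTriang _ hT) (-1)
    ⟨t.ge_antitone (by omega) _ (t.ge_shift 0 (-1) 1 (by omega) H hH.2)⟩ ⟨hx₁⟩).ge
  obtain ⟨yF, hyF, ⟨e₁⟩⟩ := htf.exists_mem_torsionFree_iso (H := B'⟦(-1 : ℤ)⟧)
    ⟨t.le_shift (-1) (-1) 0 (by omega) B' hB', t.ge_shift (-1) (-1) 0 (by omega) B' hB'₀⟩
    fun a ha => (forall_hom_shift_eq_zero_iff a B' 1).1 fun ψ => by
      have hψ : ψ ≫ f = 0 := (forall_hom_shift_eq_zero_iff a x 1).2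
        (fun φ => hx' φ (tiltAisle_of_mem_torsion htf ha)) (ψ ≫ f)
      obtain ⟨r, hr⟩ := Triangle.coyoneda_exact₂ _ (inv_rot_of_distTriang _ hT) ψ hψ
      rw [hr, t.zero_of_isLE_of_isGE r (-1) 1 (by omega)
        ⟨t.le_shift 0 1 (-1) (by omega) a (htf.subset_T ha).1⟩
        ⟨t.ge_shift 0 (-1) 1 (by omega) H hH.2⟩, zero_comp]
      rfl
  exact mem_tiltSet_of_distTriang hT hyF hyT
    ((shiftFunctor D 1).mapIso e₁.symm ≪≫ (shiftFunctorCompIsoId D (-1) 1 (by omega)).app B') e₃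

-- `tiltCoaisle` is `D'^{≥1}`, whence the shift by `n - 1`.
variable (t) in
def tilt (htf : IsHeartTorsionPair t T F) : TStructure D where
  le n := (t.tiltAisle F).shift n
  ge n := (t.tiltCoaisle F).shift (n - 1)
  le_shift n a n' h X hX := by
    rwa [← (t.tiltAisle F).shift_shift a n' n h] at hX
  ge_shift n a n' h X hX := by
    rwa [← (t.tiltCoaisle F).shift_shift a (n' - 1) (n - 1) (by omega)] at hX
  zero' X Y f hX hY := by
    rw [ObjectProperty.shift_zero] at hX
    rw [sub_self, ObjectProperty.shift_zero] at hY
    exact hY f hX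
  le_zero_le := by
    rw [ObjectProperty.shift_zero]
    exact tiltAisle_le_shift_one htf.subset_F
  ge_one_le := by
    rw [sub_self, ObjectProperty.shift_zero, zero_sub]
    exact tiltCoaisle_le_shift_neg_one htf.subset_F
  exists_triangle_zero_one A := by
    rw [sub_self, ObjectProperty.shift_zero, ObjectProperty.shift_zero]
    exact exists_distTriang_tiltAisle_tiltCoaisle htf A

lemma tilt_isBounded (ht : TStructureIsBounded t) (htf : IsHeartTorsionPair t T F) :
    TStructureIsBounded (t.tilt htf) := by
  intro X
  obtain ⟨a, b, ha, hb⟩ := ht X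
  exact ⟨a, b + 1, fun Z φ hZ => hZ φ (Or.inl (t.ge_shift a (a - 1) 1 (by omega) X ha)),
    le_neg_one_le_tiltAisle htf.subset_F _ (t.le_shift b (b + 1) (-1) (by omega) X hb)⟩

lemma mem_heartSet_tilt_iff (htf : IsHeartTorsionPair t T F) (x : D) :
    x ∈ heartSet (t.tilt htf) ↔ t.tiltAisle F x ∧ t.tiltCoaisle F (x⟦(-1 : ℤ)⟧) := by
  change (t.tiltAisle F).shift 0 x ∧ (t.tiltCoaisle F).shift (0 - 1) x ↔ _
  rw [ObjectProperty.shift_zero, zero_sub]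
  rfl

lemma heartSet_tilt (htf : IsHeartTorsionPair t T F) : heartSet (t.tilt htf) = tiltSet T F := by
  ext x
  rw [mem_heartSet_tilt_iff]
  exact ⟨fun hx => mem_tiltSet_of_tiltAisle htf hx.1 hx.2,
    fun hx => ⟨tiltAisle_of_mem_tiltSet htf hx, tiltCoaisle_shift_of_mem_tiltSet htf hx⟩⟩

end CategoryTheory.Triangulated.TStructure

/-- The Happel–Reiten–Smalø tilt of the heart of a bounded t-structure at a torsion pair
`(T, F)` is the heart of a bounded t-structure. -/
theorem stmt7 (t : TStructure D) (ht : TStructureIsBounded t) (T F : Set D)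
    (htf : IsHeartTorsionPair t T F) :
    ∃ t' : TStructure D, TStructureIsBounded t' ∧ heartSet t' = tiltSet T F :=
  ⟨t.tilt htf, t.tilt_isBounded ht htf, t.heartSet_tilt htf⟩
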